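/- Let C be a 2-category and (F, ψ): X → X' a 1-morphism in Colax(I, C). Then (F, ψ) is an equivalence in the 2-category Colax(I, C) if and only if F(i) is an equivalence in C for every object i of I and ψ(a) is an invertible 2-morphism in C for every morphism a of I. -/

import Mathlib

open CategoryTheory CategoryTheory.Bicategory

universe w' v' u' v u

variable {I : Type u} [Category.{v} I]
variable {C : Type u'} [Bicategory.{w', v'} C] [Bicategory.Strict C]

/-- Colax functors from the small category `I` to the 2-category `C`, i.e.
oplax functors out of `I` viewed as a locally discrete 2-category. -/
abbrev ColaxFun (I : Type u) [Category.{v} I] (C : Type u') [Bicategory.{w', v'} C] :=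
  OplaxFunctor (LocallyDiscrete I) C

/-- The data of a left transformation `(F, ψ) : X ⟶ X'` between colax functors:
1-morphisms `F(i) : X(i) ⟶ X'(i)` and 2-morphisms `ψ(a) : X'(a) ∘ F(i) ⟹ F(j) ∘ X(a)`. -/
structure LeftTransData (X X' : ColaxFun I C) where
  app : ∀ i : LocallyDiscrete I, X.obj i ⟶ X'.obj i
  ψ : ∀ {i j : LocallyDiscrete I} (a : i ⟶ j), app i ≫ X'.map a ⟶ X.map a ≫ app j

/-- The axioms (a) and (b) for left transformations between colax functors. -/
def IsLeftTrans {X X' : ColaxFun I C} (F : LeftTransData X X') : Prop :=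
  (∀ i : LocallyDiscrete I,
    F.ψ (𝟙 i) ≫ X.mapId i ▷ F.app i =
      F.app i ◁ X'.mapId i ≫ (ρ_ (F.app i)).hom ≫ (λ_ (F.app i)).inv) ∧
  (∀ {i j l : LocallyDiscrete I} (a : i ⟶ j) (b : j ⟶ l),
    F.ψ (a ≫ b) ≫ X.mapComp a b ▷ F.app l =
      F.app i ◁ X'.mapComp a b ≫ (α_ (F.app i) (X'.map a) (X'.map b)).inv ≫
        F.ψ a ▷ X'.map b ≫ (α_ (X.map a) (F.app j) (X'.map b)).hom ≫
        X.map a ◁ F.ψ b ≫ (α_ (X.map a) (X.map b) (F.app l)).inv)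

/-- The data of a 2-morphism `ζ : (F, ψ) ⟹ (F', ψ')` between left transformations. -/
structure TwoMorData {X X' : ColaxFun I C} (F G : LeftTransData X X') where
  app : ∀ i : LocallyDiscrete I, F.app i ⟶ G.app i

/-- The compatibility axiom for 2-morphisms between left transformations. -/
def IsTwoMor {X X' : ColaxFun I C} {F G : LeftTransData X X'}
    (ζ : TwoMorData F G) : Prop :=
  ∀ {i j : LocallyDiscrete I} (a : i ⟶ j),
    ζ.app i ▷ X'.map a ≫ G.ψ a = F.ψ a ≫ X.map a ◁ ζ.app j

/-- The identity left transformation. -/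
def LeftTransData.id (X : ColaxFun I C) : LeftTransData X X where
  app i := 𝟙 (X.obj i)
  ψ a := (λ_ (X.map a)).hom ≫ (ρ_ (X.map a)).inv

/-- Composition of left transformations. -/
def LeftTransData.comp {X X' X'' : ColaxFun I C}
    (F : LeftTransData X X') (G : LeftTransData X' X'') : LeftTransData X X'' where
  app i := F.app i ≫ G.app i
  ψ {i j} a :=
    (α_ (F.app i) (G.app i) (X''.map a)).hom ≫ F.app i ◁ G.ψ a ≫
      (α_ (F.app i) (X'.map a) (G.app j)).inv ≫ F.ψ a ▷ G.app j ≫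
      (α_ (X.map a) (F.app j) (G.app j)).hom

/-- The identity 2-morphism. -/
def TwoMorData.id {X X' : ColaxFun I C} (F : LeftTransData X X') : TwoMorData F F where
  app i := 𝟙 (F.app i)

/-- Vertical composition of 2-morphisms. -/
def TwoMorData.vcomp {X X' : ColaxFun I C} {F G H : LeftTransData X X'}
    (ζ : TwoMorData F G) (ξ : TwoMorData G H) : TwoMorData F H where
  app i := ζ.app i ≫ ξ.app i

/-- Horizontal composition of 2-morphisms. -/
def TwoMorData.hcomp {X X' X'' : ColaxFun I C} {F F' : LeftTransData X X'}
    {G G' : LeftTransData X' X''} (ζ : TwoMorData F F') (ξ : TwoMorData G G') :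
    TwoMorData (F.comp G) (F'.comp G') where
  app i := ζ.app i ▷ G.app i ≫ F'.app i ◁ ξ.app i

/-- Invertibility of a 2-morphism in `Colax(I, C)`. -/
def IsInvertibleTwoMor {X X' : ColaxFun I C} {F G : LeftTransData X X'}
    (ζ : TwoMorData F G) : Prop :=
  IsTwoMor ζ ∧ ∃ ξ : TwoMorData G F, IsTwoMor ξ ∧
    ζ.vcomp ξ = TwoMorData.id F ∧ ξ.vcomp ζ = TwoMorData.id G

/-- A left transformation is an equivalence in the 2-category `Colax(I, C)` if it has a
quasi-inverse up to invertible 2-morphisms. -/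
def IsEquivInColax {X X' : ColaxFun I C} (F : LeftTransData X X') : Prop :=
  IsLeftTrans F ∧ ∃ G : LeftTransData X' X, IsLeftTrans G ∧
    (∃ ζ : TwoMorData (F.comp G) (LeftTransData.id X), IsInvertibleTwoMor ζ) ∧
    (∃ ξ : TwoMorData (G.comp F) (LeftTransData.id X'), IsInvertibleTwoMor ξ)

/-- A 1-morphism `f` in a 2-category is an equivalence if there are `g` and invertible
2-morphisms `g ∘ f ⟹ 𝟙` and `f ∘ g ⟹ 𝟙`. -/
def IsEquivalence1Cell {x y : C} (f : x ⟶ y) : Prop :=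
  ∃ g : y ⟶ x, Nonempty (f ≫ g ≅ 𝟙 x) ∧ Nonempty (g ≫ f ≅ 𝟙 y)


section AuxMine

variable {B : Type u'} [Bicategory.{w', v'} B]

/-- 2-out-of-6 style: if `s ≫ t` and `t ≫ u` are isos, so is `t`. -/
theorem isIso_of_isIso_comp {V : Type*} [Category V] {v w x y : V}
    (s : v ⟶ w) (t : w ⟶ x) (u : x ⟶ y) (h1 : IsIso (s ≫ t)) (h2 : IsIso (t ≫ u)) :
    IsIso t := by
  have ht : t ≫ u ≫ inv (t ≫ u) = 𝟙 _ := by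
    rw [← Category.assoc, IsIso.hom_inv_id]
  have hl : (inv (s ≫ t) ≫ s) ≫ t = 𝟙 _ := by
    rw [Category.assoc, IsIso.inv_hom_id]
  refine ⟨u ≫ inv (t ≫ u), ht, ?_⟩
  calc (u ≫ inv (t ≫ u)) ≫ t
      = ((inv (s ≫ t) ≫ s) ≫ t) ≫ (u ≫ inv (t ≫ u)) ≫ t := by
        rw [hl, Category.id_comp]
    _ = (inv (s ≫ t) ≫ s) ≫ (t ≫ u ≫ inv (t ≫ u)) ≫ t := by
        simp only [Category.assoc]
    _ = 𝟙 _ := by rw [ht, Category.id_comp, hl]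

theorem exists_adjointEquiv {x y : B} (f : x ⟶ y)
    (h : ∃ g : y ⟶ x, Nonempty (f ≫ g ≅ 𝟙 x) ∧ Nonempty (g ≫ f ≅ 𝟙 y)) :
    ∃ (g : y ⟶ x) (η : 𝟙 x ≅ f ≫ g) (eps : g ≫ f ≅ 𝟙 y),
      leftZigzag η.hom eps.hom = (λ_ f).hom ≫ (ρ_ f).inv ∧
      rightZigzag η.hom eps.hom = (ρ_ g).hom ≫ (λ_ g).inv := by
  obtain ⟨g, ⟨η'⟩, ⟨eps'⟩⟩ := h
  let e : Bicategory.Equivalence x y := .mkOfAdjointifyCounit η'.symm eps'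
  exact ⟨g, e.unit, e.counit, e.left_triangle_hom, e.right_triangle_hom⟩

end AuxMine

section MainAux

variable {X X' : ColaxFun I C} (F : LeftTransData X X')
variable (g : ∀ i : LocallyDiscrete I, X'.obj i ⟶ X.obj i)
variable (η : ∀ i : LocallyDiscrete I, 𝟙 (X.obj i) ≅ F.app i ≫ g i)
variable (eps : ∀ i : LocallyDiscrete I, g i ≫ F.app i ≅ 𝟙 (X'.obj i))
variable (pinv : ∀ {i j : LocallyDiscrete I} (a : i ⟶ j),
  X.map a ≫ F.app j ⟶ F.app i ≫ X'.map a)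

/-- The candidate quasi-inverse 2-cells. -/
def invPsi {i j : LocallyDiscrete I} (a : i ⟶ j) :
    g i ≫ X.map a ⟶ X'.map a ≫ g j :=
  𝟙 _ ⊗≫ g i ◁ X.map a ◁ (η j).hom ⊗≫ g i ◁ pinv a ▷ g j ⊗≫
    (eps i).hom ▷ (X'.map a ≫ g j) ⊗≫ 𝟙 _

theorem invPsi_id
    (hF : IsLeftTrans F)
    (hψ2 : ∀ {i j : LocallyDiscrete I} (a : i ⟶ j), pinv a ≫ F.ψ a = 𝟙 _)
    (hR : ∀ i, rightZigzag (η i).hom (eps i).hom = (ρ_ (g i)).hom ≫ (λ_ (g i)).inv)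
    (i : LocallyDiscrete I) :
    invPsi F g η eps pinv (𝟙 i) ≫ X'.mapId i ▷ g i =
      g i ◁ X.mapId i ≫ (ρ_ (g i)).hom ≫ (λ_ (g i)).inv := by
  have hder : pinv (𝟙 i) ≫ F.app i ◁ X'.mapId i =
      X.mapId i ▷ F.app i ≫ (λ_ (F.app i)).hom ≫ (ρ_ (F.app i)).inv := by
    have h1 := hF.1 i
    calc pinv (𝟙 i) ≫ F.app i ◁ X'.mapId i
        = pinv (𝟙 i) ≫ (F.app i ◁ X'.mapId i ≫ (ρ_ _).hom ≫ (λ_ _).inv) ≫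
            (λ_ _).hom ≫ (ρ_ _).inv := by simp
      _ = pinv (𝟙 i) ≫ (F.ψ (𝟙 i) ≫ X.mapId i ▷ F.app i) ≫ (λ_ _).hom ≫ (ρ_ _).inv := by
          rw [h1]
      _ = _ := by simp only [← Category.assoc]; rw [hψ2]; simp
  calc invPsi F g η eps pinv (𝟙 i) ≫ X'.mapId i ▷ g i
      = 𝟙 _ ⊗≫ g i ◁ X.map (𝟙 i) ◁ (η i).hom ⊗≫ g i ◁ pinv (𝟙 i) ▷ g i ⊗≫
          ((eps i).hom ▷ (X'.map (𝟙 i) ≫ g i) ≫ 𝟙 _ ◁ (X'.mapId i ▷ g i)) ⊗≫ 𝟙 _ := by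
        dsimp only [invPsi]; bicategory
    _ = 𝟙 _ ⊗≫ g i ◁ X.map (𝟙 i) ◁ (η i).hom ⊗≫
          g i ◁ (pinv (𝟙 i) ≫ F.app i ◁ X'.mapId i) ▷ g i ⊗≫
          (eps i).hom ▷ (𝟙 _ ≫ g i) ⊗≫ 𝟙 _ := by
        rw [← whisker_exchange]; bicategory
    _ = 𝟙 _ ⊗≫ g i ◁ (X.map (𝟙 i) ◁ (η i).hom ≫ X.mapId i ▷ (F.app i ≫ g i)) ⊗≫
          (eps i).hom ▷ (𝟙 _ ≫ g i) ⊗≫ 𝟙 _ := by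
        rw [hder]; bicategory
    _ = 𝟙 _ ⊗≫ g i ◁ X.mapId i ⊗≫ rightZigzag (η i).hom (eps i).hom ⊗≫ 𝟙 _ := by
        rw [whisker_exchange]; bicategory
    _ = g i ◁ X.mapId i ≫ (ρ_ (g i)).hom ≫ (λ_ (g i)).inv := by
        rw [hR i]; bicategory

theorem counit_mod
    (hψ1 : ∀ {i j : LocallyDiscrete I} (a : i ⟶ j), F.ψ a ≫ pinv a = 𝟙 _)
    (hL : ∀ i, leftZigzag (η i).hom (eps i).hom = (λ_ (F.app i)).hom ≫ (ρ_ (F.app i)).inv)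
    {i j : LocallyDiscrete I} (a : i ⟶ j) :
    (eps i).hom ▷ X'.map a ≫ (λ_ (X'.map a)).hom ≫ (ρ_ (X'.map a)).inv =
      ((α_ (g i) (F.app i) (X'.map a)).hom ≫ g i ◁ F.ψ a ≫
        (α_ (g i) (X.map a) (F.app j)).inv ≫ invPsi F g η eps pinv a ▷ F.app j ≫
        (α_ (X'.map a) (g j) (F.app j)).hom) ≫ X'.map a ◁ (eps j).hom := by
  symm
  calc ((α_ (g i) (F.app i) (X'.map a)).hom ≫ g i ◁ F.ψ a ≫
        (α_ (g i) (X.map a) (F.app j)).inv ≫ invPsi F g η eps pinv a ▷ F.app j ≫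
        (α_ (X'.map a) (g j) (F.app j)).hom) ≫ X'.map a ◁ (eps j).hom
      = 𝟙 _ ⊗≫ g i ◁ F.ψ a ⊗≫ (g i ≫ X.map a) ◁ ((η j).hom ▷ F.app j) ⊗≫
          g i ◁ (pinv a ▷ (g j ≫ F.app j)) ⊗≫
          ((eps i).hom ▷ (X'.map a ≫ g j ≫ F.app j) ≫
            𝟙 _ ◁ (X'.map a ◁ (eps j).hom)) ⊗≫ 𝟙 _ := by
        dsimp only [invPsi]; bicategory
    _ = 𝟙 _ ⊗≫ g i ◁ F.ψ a ⊗≫ (g i ≫ X.map a) ◁ ((η j).hom ▷ F.app j) ⊗≫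
          g i ◁ (pinv a ▷ (g j ≫ F.app j) ≫ (F.app i ≫ X'.map a) ◁ (eps j).hom) ⊗≫
          (eps i).hom ▷ X'.map a ⊗≫ 𝟙 _ := by
        rw [← whisker_exchange]; bicategory
    _ = 𝟙 _ ⊗≫ g i ◁ F.ψ a ⊗≫
          (g i ≫ X.map a) ◁ leftZigzag (η j).hom (eps j).hom ⊗≫
          g i ◁ pinv a ⊗≫ (eps i).hom ▷ X'.map a ⊗≫ 𝟙 _ := by
        rw [← whisker_exchange]; bicategory
    _ = 𝟙 _ ⊗≫ g i ◁ (F.ψ a ≫ pinv a) ⊗≫ (eps i).hom ▷ X'.map a ⊗≫ 𝟙 _ := by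
        rw [hL j]; bicategory
    _ = (eps i).hom ▷ X'.map a ≫ (λ_ (X'.map a)).hom ≫ (ρ_ (X'.map a)).inv := by
        rw [hψ1 a]; bicategory

theorem unit_mod
    (hψ2 : ∀ {i j : LocallyDiscrete I} (a : i ⟶ j), pinv a ≫ F.ψ a = 𝟙 _)
    (hL : ∀ i, leftZigzag (η i).hom (eps i).hom = (λ_ (F.app i)).hom ≫ (ρ_ (F.app i)).inv)
    {i j : LocallyDiscrete I} (a : i ⟶ j) :
    (η i).inv ▷ X.map a ≫ (λ_ (X.map a)).hom ≫ (ρ_ (X.map a)).inv =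
      ((α_ (F.app i) (g i) (X.map a)).hom ≫ F.app i ◁ invPsi F g η eps pinv a ≫
        (α_ (F.app i) (X'.map a) (g j)).inv ≫ F.ψ a ▷ g j ≫
        (α_ (X.map a) (F.app j) (g j)).hom) ≫ X.map a ◁ (η j).inv := by
  rw [← cancel_epi ((η i).hom ▷ X.map a), ← cancel_mono (X.map a ◁ (η j).hom)]
  have E : (η i).hom ▷ X.map a ≫
      ((α_ (F.app i) (g i) (X.map a)).hom ≫ F.app i ◁ invPsi F g η eps pinv a ≫
        (α_ (F.app i) (X'.map a) (g j)).inv ≫ F.ψ a ▷ g j ≫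
        (α_ (X.map a) (F.app j) (g j)).hom) =
      (λ_ (X.map a)).hom ≫ (ρ_ (X.map a)).inv ≫ X.map a ◁ (η j).hom := by
    calc (η i).hom ▷ X.map a ≫
        ((α_ (F.app i) (g i) (X.map a)).hom ≫ F.app i ◁ invPsi F g η eps pinv a ≫
          (α_ (F.app i) (X'.map a) (g j)).inv ≫ F.ψ a ▷ g j ≫
          (α_ (X.map a) (F.app j) (g j)).hom)
        = 𝟙 _ ⊗≫ ((η i).hom ▷ (X.map a ≫ 𝟙 _) ≫
            (F.app i ≫ g i) ◁ (X.map a ◁ (η j).hom)) ⊗≫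
            (F.app i ≫ g i) ◁ (pinv a ▷ g j) ⊗≫
            F.app i ◁ ((eps i).hom ▷ (X'.map a ≫ g j)) ⊗≫ F.ψ a ▷ g j ⊗≫ 𝟙 _ := by
          dsimp only [invPsi]; bicategory
      _ = 𝟙 _ ⊗≫ X.map a ◁ (η j).hom ⊗≫
            ((η i).hom ▷ ((X.map a ≫ F.app j) ≫ g j) ≫
              (F.app i ≫ g i) ◁ (pinv a ▷ g j)) ⊗≫
            F.app i ◁ ((eps i).hom ▷ (X'.map a ≫ g j)) ⊗≫ F.ψ a ▷ g j ⊗≫ 𝟙 _ := by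
          rw [← whisker_exchange]; bicategory
      _ = 𝟙 _ ⊗≫ X.map a ◁ (η j).hom ⊗≫ pinv a ▷ g j ⊗≫
            leftZigzag (η i).hom (eps i).hom ▷ (X'.map a ≫ g j) ⊗≫
            F.ψ a ▷ g j ⊗≫ 𝟙 _ := by
          rw [← whisker_exchange]; bicategory
      _ = 𝟙 _ ⊗≫ X.map a ◁ (η j).hom ⊗≫ (pinv a ≫ F.ψ a) ▷ g j ⊗≫ 𝟙 _ := by
          rw [hL i]; bicategory
      _ = (λ_ (X.map a)).hom ≫ (ρ_ (X.map a)).inv ≫ X.map a ◁ (η j).hom := by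
          rw [hψ2 a]; bicategory
  simp only [Category.assoc, hom_inv_whiskerRight_assoc, hom_inv_whiskerRight,
    whiskerLeft_inv_hom, Category.comp_id, Category.id_comp]
  exact E.symm

/-- Left part of the inverse 2-cell, as a block. -/
def blockP {i j : LocallyDiscrete I} (a : i ⟶ j) :
    g i ≫ X.map a ≫ F.app j ⟶ X'.map a :=
  𝟙 _ ⊗≫ g i ◁ pinv a ⊗≫ (eps i).hom ▷ X'.map a ⊗≫ 𝟙 _

/-- Right part of the inverse 2-cell, as a block. -/
def blockQ {j l : LocallyDiscrete I} (b : j ⟶ l) :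
    X.map b ⟶ F.app j ≫ X'.map b ≫ g l :=
  𝟙 _ ⊗≫ X.map b ◁ (η l).hom ⊗≫ pinv b ▷ g l ⊗≫ 𝟙 _

theorem invPsi_comp
    (hF : IsLeftTrans F)
    (hψ1 : ∀ {i j : LocallyDiscrete I} (a : i ⟶ j), F.ψ a ≫ pinv a = 𝟙 _)
    (hψ2 : ∀ {i j : LocallyDiscrete I} (a : i ⟶ j), pinv a ≫ F.ψ a = 𝟙 _)
    (hL : ∀ i, leftZigzag (η i).hom (eps i).hom = (λ_ (F.app i)).hom ≫ (ρ_ (F.app i)).inv)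
    {i j l : LocallyDiscrete I} (a : i ⟶ j) (b : j ⟶ l) :
    invPsi F g η eps pinv (a ≫ b) ≫ X'.mapComp a b ▷ g l =
      g i ◁ X.mapComp a b ≫ (α_ (g i) (X.map a) (X.map b)).inv ≫
        invPsi F g η eps pinv a ▷ X.map b ≫ (α_ (X'.map a) (g j) (X.map b)).hom ≫
        X'.map a ◁ invPsi F g η eps pinv b ≫ (α_ (X'.map a) (X'.map b) (g l)).inv := by
  have h2 := hF.2 a b
  haveI : IsIso (F.ψ (a ≫ b)) := ⟨pinv (a ≫ b), hψ1 _, hψ2 _⟩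
  have hA : (α_ (F.app i) (X'.map a) (X'.map b)).inv ≫ F.ψ a ▷ X'.map b ≫
      (α_ (X.map a) (F.app j) (X'.map b)).hom ≫ X.map a ◁ F.ψ b ≫
      (α_ (X.map a) (X.map b) (F.app l)).inv ≫ (α_ (X.map a) (X.map b) (F.app l)).hom ≫
      X.map a ◁ pinv b ≫ (α_ (X.map a) (F.app j) (X'.map b)).inv ≫
      pinv a ▷ X'.map b ≫ (α_ (F.app i) (X'.map a) (X'.map b)).hom = 𝟙 _ := by
    calc (α_ (F.app i) (X'.map a) (X'.map b)).inv ≫ F.ψ a ▷ X'.map b ≫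
        (α_ (X.map a) (F.app j) (X'.map b)).hom ≫ X.map a ◁ F.ψ b ≫
        (α_ (X.map a) (X.map b) (F.app l)).inv ≫ (α_ (X.map a) (X.map b) (F.app l)).hom ≫
        X.map a ◁ pinv b ≫ (α_ (X.map a) (F.app j) (X'.map b)).inv ≫
        pinv a ▷ X'.map b ≫ (α_ (F.app i) (X'.map a) (X'.map b)).hom
        = 𝟙 _ ⊗≫ F.ψ a ▷ X'.map b ⊗≫ X.map a ◁ (F.ψ b ≫ pinv b) ⊗≫
            pinv a ▷ X'.map b ⊗≫ 𝟙 _ := by bicategory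
      _ = 𝟙 _ ⊗≫ (F.ψ a ≫ pinv a) ▷ X'.map b ⊗≫ 𝟙 _ := by rw [hψ1 b]; bicategory
      _ = 𝟙 _ := by rw [hψ1 a]; bicategory
  have hderc : pinv (a ≫ b) ≫ F.app i ◁ X'.mapComp a b =
      X.mapComp a b ▷ F.app l ≫ (α_ (X.map a) (X.map b) (F.app l)).hom ≫
        X.map a ◁ pinv b ≫ (α_ (X.map a) (F.app j) (X'.map b)).inv ≫
        pinv a ▷ X'.map b ≫ (α_ (F.app i) (X'.map a) (X'.map b)).hom := by
    rw [← cancel_epi (F.ψ (a ≫ b))]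
    conv_lhs => rw [← Category.assoc, hψ1, Category.id_comp]
    rw [reassoc_of% h2, hA, Category.comp_id]
  calc invPsi F g η eps pinv (a ≫ b) ≫ X'.mapComp a b ▷ g l
      = 𝟙 _ ⊗≫ g i ◁ X.map (a ≫ b) ◁ (η l).hom ⊗≫ g i ◁ pinv (a ≫ b) ▷ g l ⊗≫
          ((eps i).hom ▷ (X'.map (a ≫ b) ≫ g l) ≫ 𝟙 _ ◁ (X'.mapComp a b ▷ g l)) ⊗≫ 𝟙 _ := by
        dsimp only [invPsi]; bicategory
    _ = 𝟙 _ ⊗≫ g i ◁ X.map (a ≫ b) ◁ (η l).hom ⊗≫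
          g i ◁ (pinv (a ≫ b) ≫ F.app i ◁ X'.mapComp a b) ▷ g l ⊗≫
          (eps i).hom ▷ ((X'.map a ≫ X'.map b) ≫ g l) ⊗≫ 𝟙 _ := by
        rw [← whisker_exchange]; bicategory
    _ = 𝟙 _ ⊗≫ g i ◁ (X.map (a ≫ b) ◁ (η l).hom ≫ X.mapComp a b ▷ (F.app l ≫ g l)) ⊗≫
          g i ◁ X.map a ◁ pinv b ▷ g l ⊗≫ g i ◁ pinv a ▷ (X'.map b ≫ g l) ⊗≫
          (eps i).hom ▷ (X'.map a ≫ X'.map b ≫ g l) ⊗≫ 𝟙 _ := by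
        rw [hderc]; bicategory
    _ = 𝟙 _ ⊗≫ g i ◁ X.mapComp a b ⊗≫ g i ◁ (X.map a ≫ X.map b) ◁ (η l).hom ⊗≫
          g i ◁ X.map a ◁ pinv b ▷ g l ⊗≫ g i ◁ pinv a ▷ (X'.map b ≫ g l) ⊗≫
          (eps i).hom ▷ (X'.map a ≫ X'.map b ≫ g l) ⊗≫ 𝟙 _ := by
        rw [whisker_exchange]; bicategory
    _ = 𝟙 _ ⊗≫ g i ◁ X.mapComp a b ⊗≫ g i ◁ (X.map a ≫ X.map b) ◁ (η l).hom ⊗≫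
          g i ◁ X.map a ◁ pinv b ▷ g l ⊗≫
          (g i ≫ X.map a) ◁ leftZigzag (η j).hom (eps j).hom ▷ (X'.map b ≫ g l) ⊗≫
          g i ◁ pinv a ▷ (X'.map b ≫ g l) ⊗≫
          (eps i).hom ▷ (X'.map a ≫ X'.map b ≫ g l) ⊗≫ 𝟙 _ := by
        rw [hL j]; bicategory
    _ = 𝟙 _ ⊗≫ g i ◁ X.mapComp a b ⊗≫ g i ◁ (X.map a ≫ X.map b) ◁ (η l).hom ⊗≫
          g i ◁ X.map a ◁ pinv b ▷ g l ⊗≫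
          (g i ≫ X.map a) ◁ ((η j).hom ▷ (F.app j ≫ X'.map b ≫ g l)) ⊗≫
          ((g i ≫ X.map a ≫ F.app j) ◁ ((eps j).hom ▷ (X'.map b ≫ g l)) ≫
            blockP F g eps pinv a ▷ (𝟙 _ ≫ X'.map b ≫ g l)) ⊗≫ 𝟙 _ := by
        dsimp only [blockP]; bicategory
    _ = 𝟙 _ ⊗≫ g i ◁ X.mapComp a b ⊗≫ g i ◁ (X.map a ≫ X.map b) ◁ (η l).hom ⊗≫
          g i ◁ X.map a ◁ pinv b ▷ g l ⊗≫
          (g i ≫ X.map a) ◁ ((η j).hom ▷ (F.app j ≫ X'.map b ≫ g l)) ⊗≫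
          (blockP F g eps pinv a ▷ ((g j ≫ F.app j) ≫ X'.map b ≫ g l) ≫
            X'.map a ◁ ((eps j).hom ▷ (X'.map b ≫ g l))) ⊗≫ 𝟙 _ := by
        rw [whisker_exchange]
    _ = 𝟙 _ ⊗≫ g i ◁ X.mapComp a b ⊗≫
          (g i ≫ X.map a) ◁ (𝟙 (X.obj j) ◁ blockQ F g η pinv b ≫
            (η j).hom ▷ (F.app j ≫ X'.map b ≫ g l)) ⊗≫
          blockP F g eps pinv a ▷ (g j ≫ F.app j ≫ X'.map b ≫ g l) ⊗≫
          X'.map a ◁ ((eps j).hom ▷ (X'.map b ≫ g l)) ⊗≫ 𝟙 _ := by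
        dsimp only [blockQ]; bicategory
    _ = 𝟙 _ ⊗≫ g i ◁ X.mapComp a b ⊗≫
          (g i ≫ X.map a) ◁ ((η j).hom ▷ X.map b ≫
            (F.app j ≫ g j) ◁ blockQ F g η pinv b) ⊗≫
          blockP F g eps pinv a ▷ (g j ≫ F.app j ≫ X'.map b ≫ g l) ⊗≫
          X'.map a ◁ ((eps j).hom ▷ (X'.map b ≫ g l)) ⊗≫ 𝟙 _ := by
        rw [whisker_exchange]
    _ = 𝟙 _ ⊗≫ g i ◁ X.mapComp a b ⊗≫
          (g i ≫ X.map a) ◁ ((η j).hom ▷ X.map b) ⊗≫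
          ((g i ≫ X.map a ≫ F.app j) ◁ (g j ◁ blockQ F g η pinv b) ≫
            blockP F g eps pinv a ▷ (g j ≫ F.app j ≫ X'.map b ≫ g l)) ⊗≫
          X'.map a ◁ ((eps j).hom ▷ (X'.map b ≫ g l)) ⊗≫ 𝟙 _ := by
        bicategory
    _ = 𝟙 _ ⊗≫ g i ◁ X.mapComp a b ⊗≫
          (g i ≫ X.map a) ◁ ((η j).hom ▷ X.map b) ⊗≫
          (blockP F g eps pinv a ▷ (g j ≫ X.map b) ≫
            X'.map a ◁ (g j ◁ blockQ F g η pinv b)) ⊗≫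
          X'.map a ◁ ((eps j).hom ▷ (X'.map b ≫ g l)) ⊗≫ 𝟙 _ := by
        rw [whisker_exchange]
    _ = g i ◁ X.mapComp a b ≫ (α_ (g i) (X.map a) (X.map b)).inv ≫
          invPsi F g η eps pinv a ▷ X.map b ≫ (α_ (X'.map a) (g j) (X.map b)).hom ≫
          X'.map a ◁ invPsi F g η eps pinv b ≫ (α_ (X'.map a) (X'.map b) (g l)).inv := by
        dsimp only [invPsi, blockP, blockQ]; bicategory

end MainAux


section Fwd
variable {B : Type u'} [Bicategory.{w', v'} B]

theorem isIso_strip_left {V : Type*} [Category V] {a b c : V}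
    (x : a ⟶ b) (y : b ⟶ c) [IsIso x] (h : IsIso (x ≫ y)) : IsIso y := by
  have : y = inv x ≫ x ≫ y := by simp
  rw [this]; infer_instance

theorem isIso_psi_aux {xi xj yi yj : B} (f : xi ⟶ yi) (f' : xj ⟶ yj)
    (g : yi ⟶ xi) (g' : yj ⟶ xj) (Xa : xi ⟶ xj) (Ya : yi ⟶ yj)
    (p : f ≫ Ya ⟶ Xa ≫ f') (q : g ≫ Xa ⟶ Ya ≫ g') (z : f ≫ g ⟶ 𝟙 xi) [IsIso z]
    (h1 : IsIso ((α_ f g Xa).hom ≫ f ◁ q ≫ (α_ f Ya g').inv ≫ p ▷ g' ≫ (α_ Xa f' g').hom))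
    (h2 : IsIso ((α_ g f Ya).hom ≫ g ◁ p ≫ (α_ g Xa f').inv ≫ q ▷ f' ≫ (α_ Ya g' f').hom)) :
    IsIso p := by
  have h1' : IsIso (((α_ f g Xa).hom ≫ f ◁ q ≫ (α_ f Ya g').inv ≫ p ▷ g' ≫
      (α_ Xa f' g').hom) ▷ f') := inferInstance
  have h2' : IsIso (f ◁ ((α_ g f Ya).hom ≫ g ◁ p ≫ (α_ g Xa f').inv ≫ q ▷ f' ≫
      (α_ Ya g' f').hom)) := inferInstance
  simp only [comp_whiskerRight, whisker_assoc, Category.assoc] at h1'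
  simp only [Bicategory.whiskerLeft_comp, Category.assoc] at h2'
  have hA : IsIso ((f ◁ q ▷ f') ≫ (α_ f (Ya ≫ g') f').inv ≫ (α_ f Ya g').inv ▷ f' ≫
      p ▷ g' ▷ f' ≫ (α_ Xa f' g').hom ▷ f') :=
    isIso_strip_left _ _ (isIso_strip_left _ _ h1')
  have hB : IsIso ((f ◁ (α_ g f Ya).hom ≫ f ◁ g ◁ p ≫ f ◁ (α_ g Xa f').inv) ≫
      (f ◁ q ▷ f')) := by
    have e : (f ◁ (α_ g f Ya).hom ≫ f ◁ g ◁ p ≫ f ◁ (α_ g Xa f').inv) ≫ (f ◁ q ▷ f')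
        = (f ◁ (α_ g f Ya).hom ≫ f ◁ g ◁ p ≫ f ◁ (α_ g Xa f').inv ≫ f ◁ q ▷ f' ≫
            f ◁ (α_ Ya g' f').hom) ≫ inv (f ◁ (α_ Ya g' f').hom) := by
      simp only [Category.assoc, IsIso.hom_inv_id, Category.comp_id]
    rw [e]; haveI := h2'; infer_instance
  have hY : IsIso (f ◁ q ▷ f') := isIso_of_isIso_comp _ _ _ hB hA
  haveI := hY
  have h2'' : IsIso (f ◁ g ◁ p ≫ f ◁ (α_ g Xa f').inv ≫ f ◁ q ▷ f' ≫
      f ◁ (α_ Ya g' f').hom) := isIso_strip_left _ _ h2'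
  haveI := h2''
  have hX0 : IsIso (f ◁ g ◁ p) :=
    IsIso.of_isIso_comp_right _ (f ◁ (α_ g Xa f').inv ≫ f ◁ q ▷ f' ≫ f ◁ (α_ Ya g' f').hom)
  haveI := hX0
  have hfg : IsIso ((f ≫ g) ◁ p) := by rw [comp_whiskerLeft]; infer_instance
  haveI := hfg
  have h1p : IsIso (𝟙 xi ◁ p) := by
    have he := whisker_exchange z p
    have e : 𝟙 xi ◁ p = inv (z ▷ (f ≫ Ya)) ≫ ((f ≫ g) ◁ p ≫ z ▷ (Xa ≫ f')) := by
      rw [he, ← Category.assoc, IsIso.inv_hom_id, Category.id_comp]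
    rw [e]; infer_instance
  haveI := h1p
  have e : p = (λ_ (f ≫ Ya)).inv ≫ (𝟙 xi ◁ p) ≫ (λ_ (Xa ≫ f')).hom := by simp
  rw [e]; infer_instance

end Fwd

section Glue

variable {X X' : ColaxFun I C}

theorem TwoMorData.ext' {Fa Ga : LeftTransData X X'} {u v : TwoMorData Fa Ga}
    (h : ∀ i, u.app i = v.app i) : u = v := by
  cases u; cases v; congr 1; funext i; exact h i

theorem isTwoMor_of_inv {Fa Ga : LeftTransData X X'} (ζ : TwoMorData Fa Ga)
    (hζ : IsTwoMor ζ) (ξ : TwoMorData Ga Fa)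
    (hvc : ∀ i, ζ.app i ≫ ξ.app i = 𝟙 _) (hcv : ∀ i, ξ.app i ≫ ζ.app i = 𝟙 _) :
    IsTwoMor ξ := by
  intro i j a
  haveI : IsIso (ζ.app i) := ⟨ξ.app i, hvc i, hcv i⟩
  haveI : IsIso (ζ.app j) := ⟨ξ.app j, hvc j, hcv j⟩
  rw [← cancel_epi (ζ.app i ▷ X'.map a), ← cancel_mono (X.map a ◁ ζ.app j)]
  simp only [← Category.assoc]
  rw [← comp_whiskerRight, hvc i, Bicategory.id_whiskerRight, Category.id_comp]
  simp only [Category.assoc]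
  rw [← Bicategory.whiskerLeft_comp, hcv j, Bicategory.whiskerLeft_id, Category.comp_id]
  exact (hζ a).symm

end Glue

/-- **Statement 13.** A left transformation `(F, ψ) : X ⟶ X'` is an equivalence in the
2-category `Colax(I, C)` if and only if each `F(i)` is an equivalence in `C` and each
`ψ(a)` is an invertible 2-morphism in `C` (i.e. `(F, ψ)` is `I`-equivariant). -/
theorem equivalence_in_colax_iff (X X' : ColaxFun I C) (F : LeftTransData X X')
    (hF : IsLeftTrans F) :
    IsEquivInColax F ↔
      (∀ i : LocallyDiscrete I, IsEquivalence1Cell (F.app i)) ∧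
      (∀ {i j : LocallyDiscrete I} (a : i ⟶ j), IsIso (F.ψ a)) := by
  constructor
  · rintro ⟨hF', G, hG, ⟨ζ, hζmod, ζ', hζ'mod, hvc, hcv⟩, ⟨ξ, hξmod, ξ', hξ'mod, hvc', hcv'⟩⟩
    have hvci : ∀ i, ζ.app i ≫ ζ'.app i = 𝟙 ((F.comp G).app i) :=
      fun i => congrArg (fun t => TwoMorData.app t i) hvc
    have hcvi : ∀ i, ζ'.app i ≫ ζ.app i = 𝟙 ((LeftTransData.id X).app i) :=
      fun i => congrArg (fun t => TwoMorData.app t i) hcv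
    have hvci' : ∀ i, ξ.app i ≫ ξ'.app i = 𝟙 ((G.comp F).app i) :=
      fun i => congrArg (fun t => TwoMorData.app t i) hvc'
    have hcvi' : ∀ i, ξ'.app i ≫ ξ.app i = 𝟙 ((LeftTransData.id X').app i) :=
      fun i => congrArg (fun t => TwoMorData.app t i) hcv'
    refine ⟨fun i => ⟨G.app i, ⟨⟨ζ.app i, ζ'.app i, hvci i, hcvi i⟩⟩,
      ⟨⟨ξ.app i, ξ'.app i, hvci' i, hcvi' i⟩⟩⟩, ?_⟩
    intro i j a
    haveI : IsIso (ζ.app i) := ⟨ζ'.app i, hvci i, hcvi i⟩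
    haveI : IsIso (ζ.app j) := ⟨ζ'.app j, hvci j, hcvi j⟩
    haveI : IsIso (ξ.app i) := ⟨ξ'.app i, hvci' i, hcvi' i⟩
    haveI : IsIso (ξ.app j) := ⟨ξ'.app j, hvci' j, hcvi' j⟩
    have hc1 : IsIso ((F.comp G).ψ a) := by
      have hiso : IsIso ((F.comp G).ψ a ≫ X.map a ◁ ζ.app j) := by
        rw [← hζmod a]
        dsimp only [LeftTransData.id]
        haveI : @IsIso _ _ ((F.comp G).app i) (𝟙 (X.obj i)) (ζ.app i) := ⟨ζ'.app i, hvci i, hcvi i⟩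
        infer_instance
      haveI := hiso
      exact IsIso.of_isIso_comp_right _ (X.map a ◁ ζ.app j)
    have hc2 : IsIso ((G.comp F).ψ a) := by
      have hiso : IsIso ((G.comp F).ψ a ≫ X'.map a ◁ ξ.app j) := by
        rw [← hξmod a]
        dsimp only [LeftTransData.id]
        haveI : @IsIso _ _ ((G.comp F).app i) (𝟙 (X'.obj i)) (ξ.app i) := ⟨ξ'.app i, hvci' i, hcvi' i⟩
        infer_instance
      haveI := hiso
      exact IsIso.of_isIso_comp_right _ (X'.map a ◁ ξ.app j)
    dsimp only [LeftTransData.comp] at hc1 hc2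
    haveI : @IsIso _ _ (F.app i ≫ G.app i) (𝟙 (X.obj i)) (ζ.app i) := ⟨ζ'.app i, hvci i, hcvi i⟩
    exact isIso_psi_aux (F.app i) (F.app j) (G.app i) (G.app j) (X.map a) (X'.map a)
      (F.ψ a) (G.ψ a) (ζ.app i) hc1 hc2
  · rintro ⟨h1, h2⟩
    refine ⟨hF, ?_⟩
    have hch : ∀ i, ∃ (gg : X'.obj i ⟶ X.obj i) (ηi : 𝟙 (X.obj i) ≅ F.app i ≫ gg)
        (εi : gg ≫ F.app i ≅ 𝟙 (X'.obj i)),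
        leftZigzag ηi.hom εi.hom = (λ_ (F.app i)).hom ≫ (ρ_ (F.app i)).inv ∧
        rightZigzag ηi.hom εi.hom = (ρ_ gg).hom ≫ (λ_ gg).inv :=
      fun i => exists_adjointEquiv (F.app i) (h1 i)
    choose g η eps hL hR using hch
    have hpc : ∀ (i j : LocallyDiscrete I) (a : i ⟶ j),
        ∃ pa : X.map a ≫ F.app j ⟶ F.app i ≫ X'.map a,
          F.ψ a ≫ pa = 𝟙 _ ∧ pa ≫ F.ψ a = 𝟙 _ := by
      intro i j a
      haveI := h2 a
      exact ⟨inv (F.ψ a), by simp, by simp⟩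
    choose pinv0 hp1 hp2 using hpc
    let P : ∀ {i j : LocallyDiscrete I} (a : i ⟶ j),
        X.map a ≫ F.app j ⟶ F.app i ≫ X'.map a := fun {i j} a => pinv0 i j a
    have hP1 : ∀ {i j : LocallyDiscrete I} (a : i ⟶ j), F.ψ a ≫ P a = 𝟙 _ :=
      fun a => hp1 _ _ a
    have hP2 : ∀ {i j : LocallyDiscrete I} (a : i ⟶ j), P a ≫ F.ψ a = 𝟙 _ :=
      fun a => hp2 _ _ a
    refine ⟨⟨g, fun {i j} a => invPsi F g η eps P a⟩,
      ⟨fun i => invPsi_id F g η eps P hF hP2 hR i,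
       fun {i j l} a b => invPsi_comp F g η eps P hF hP1 hP2 hL a b⟩, ?_, ?_⟩
    · refine ⟨⟨fun i => (η i).inv⟩, fun {i j} a => unit_mod F g η eps P hP2 hL a,
        ⟨fun i => (η i).hom⟩, ?_,
        TwoMorData.ext' (fun i => (η i).inv_hom_id),
        TwoMorData.ext' (fun i => (η i).hom_inv_id)⟩
      refine isTwoMor_of_inv ⟨fun i => (η i).inv⟩ ?_ _ ?_ ?_
      · exact fun {i j} a => unit_mod F g η eps P hP2 hL a
      · exact fun i => (η i).inv_hom_id
      · exact fun i => (η i).hom_inv_id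
    · refine ⟨⟨fun i => (eps i).hom⟩, fun {i j} a => counit_mod F g η eps P hP1 hL a,
        ⟨fun i => (eps i).inv⟩, ?_,
        TwoMorData.ext' (fun i => (eps i).hom_inv_id),
        TwoMorData.ext' (fun i => (eps i).inv_hom_id)⟩
      refine isTwoMor_of_inv ⟨fun i => (eps i).hom⟩ ?_ _ ?_ ?_
      · exact fun {i j} a => counit_mod F g η eps P hP1 hL a
      · exact fun i => (eps i).hom_inv_id
      · exact fun i => (eps i).inv_hom_id
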